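/- A quasi-metric space (X,d) has the property that every bounded ideal of (X,d) has a colimit if and only if (X,d) is standard and the partially ordered set BX of formal balls is a local dcpo. -/

import Mathlib

open scoped ENNReal NNReal

universe u v w

/-- A quasi-metric space structure on `X`: distances valued in `[0,∞]`, with
`d x x = 0`, the triangle inequality, and separatedness. -/
structure QuasiMetric (X : Type u) where
  d : X → X → ℝ≥0∞
  d_self : ∀ x, d x x = 0
  d_triangle : ∀ x y z, d x z ≤ d x y + d y z
  d_separated : ∀ x y, d x y = 0 → d y x = 0 → x = y

namespace QuasiMetric

variable {X : Type u}

/-- The order on formal balls: `(x, r) ⊑ (y, s)` iff `s + d x y ≤ r`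
(equivalently `d x y ≤ r - s`). -/
def ballLE (q : QuasiMetric X) (p p' : X × ℝ≥0) : Prop :=
  (p'.2 : ℝ≥0∞) + q.d p.1 p'.1 ≤ (p.2 : ℝ≥0∞)

/-- `b` is a least upper bound of the set `S` of formal balls. -/
def IsBallLUB (q : QuasiMetric X) (S : Set (X × ℝ≥0)) (b : X × ℝ≥0) : Prop :=
  (∀ p ∈ S, q.ballLE p b) ∧ ∀ c, (∀ p ∈ S, q.ballLE p c) → q.ballLE b c

/-- `le` is a directed preorder (reflexive, transitive, directed). -/
def DirectedPre {D : Type v} (le : D → D → Prop) : Prop :=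
  (∀ i, le i i) ∧ (∀ i j k, le i j → le j k → le i k) ∧ ∀ i j, ∃ k, le i k ∧ le j k

/-- A net `x : D → X` is forward Cauchy: `inf_i sup_{k ≥ j ≥ i} d (x j) (x k) = 0`. -/
def ForwardCauchy (q : QuasiMetric X) {D : Type v} (le : D → D → Prop) (x : D → X) : Prop :=
  (⨅ i, ⨆ j, ⨆ (_ : le i j), ⨆ k, ⨆ (_ : le j k), q.d (x j) (x k)) = 0

/-- `a` is a Yoneda limit of the net `x : D → X`:
for all `y`, `d a y = inf_i sup_{j ≥ i} d (x j) y`. -/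
def IsYonedaLimit (q : QuasiMetric X) {D : Type v} (le : D → D → Prop) (x : D → X) (a : X) :
    Prop :=
  ∀ y, q.d a y = ⨅ i, ⨆ j, ⨆ (_ : le i j), q.d (x j) y

/-- `(X, d)` is Yoneda complete: every forward Cauchy net has a Yoneda limit. -/
def YonedaComplete (q : QuasiMetric X) : Prop :=
  ∀ (D : Type u) (le : D → D → Prop), DirectedPre le → Nonempty D →
    ∀ x : D → X, q.ForwardCauchy le x → ∃ a, q.IsYonedaLimit le x a

/-- `(X, d)` is standard: whenever a directed set of formal balls (viewed as a monotone
net indexed by itself) has a least upper bound, the corresponding forward Cauchy net of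
centers has a Yoneda limit. -/
def Standard (q : QuasiMetric X) : Prop :=
  ∀ S : Set (X × ℝ≥0), S.Nonempty → DirectedOn q.ballLE S →
    (∃ b, q.IsBallLUB S b) →
    ∃ a, q.IsYonedaLimit (fun p p' : ↥S => q.ballLE p.1 p'.1) (fun p : ↥S => p.1.1) a

/-- A weight of `(X, d)`: `φ x ≤ φ y + d x y`. -/
def IsWeight (q : QuasiMetric X) (φ : X → ℝ≥0∞) : Prop :=
  ∀ x y, φ x ≤ φ y + q.d x y

/-- The quasi-metric on weights: `ρ(φ, ψ) = sup_y (ψ y ⊖ φ y)`. -/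
noncomputable def rho {Y : Type v} (φ ψ : Y → ℝ≥0∞) : ℝ≥0∞ := ⨆ y, ψ y - φ y

/-- An ideal of `(X, d)`: a weight `φ` with `inf φ = 0` such that
`ρ(φ, min (λ, μ)) = min (ρ(φ,λ), ρ(φ,μ))` for all weights `λ`, `μ`. -/
def IsIdeal (q : QuasiMetric X) (φ : X → ℝ≥0∞) : Prop :=
  q.IsWeight φ ∧ (⨅ x, φ x) = 0 ∧
    ∀ l m : X → ℝ≥0∞, q.IsWeight l → q.IsWeight m →
      rho φ (fun x => min (l x) (m x)) = min (rho φ l) (rho φ m)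

/-- A weight `φ` is bounded: there are `r < ∞` and `a ∈ X` with `d x a ≤ r + φ x` for all `x`. -/
def BoundedWeight (q : QuasiMetric X) (φ : X → ℝ≥0∞) : Prop :=
  ∃ (r : ℝ≥0) (a : X), ∀ x, q.d x a ≤ (r : ℝ≥0∞) + φ x

/-- `b` is a colimit of the weight `φ`: for all `y`, `d b y = sup_x (d x y ⊖ φ x)`. -/
def IsColimit (q : QuasiMetric X) (φ : X → ℝ≥0∞) (b : X) : Prop :=
  ∀ y, q.d b y = ⨆ x, q.d x y - φ x

/-- The poset of formal balls is a dcpo: every (nonempty) directed subset has a lub. -/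
def BallDcpo (q : QuasiMetric X) : Prop :=
  ∀ S : Set (X × ℝ≥0), S.Nonempty → DirectedOn q.ballLE S → ∃ b, q.IsBallLUB S b

/-- The poset of formal balls is a local dcpo: every (nonempty) directed subset with an
upper bound has a lub. -/
def BallLocalDcpo (q : QuasiMetric X) : Prop :=
  ∀ S : Set (X × ℝ≥0), S.Nonempty → DirectedOn q.ballLE S →
    (∃ c, ∀ p ∈ S, q.ballLE p c) → ∃ b, q.IsBallLUB S b

/-- `u` is way below `v` in the poset of formal balls. -/
def ballWayBelow (q : QuasiMetric X) (u v : X × ℝ≥0) : Prop :=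
  ∀ S : Set (X × ℝ≥0), S.Nonempty → DirectedOn q.ballLE S →
    ∀ s, q.IsBallLUB S s → q.ballLE v s → ∃ p ∈ S, q.ballLE u p

/-- The poset of formal balls is a continuous poset: for every `p`, the set of elements
way below `p` is (nonempty) directed and has `p` as its least upper bound. -/
def BallContinuousPoset (q : QuasiMetric X) : Prop :=
  ∀ p : X × ℝ≥0,
    {u : X × ℝ≥0 | q.ballWayBelow u p}.Nonempty ∧
    DirectedOn q.ballLE {u : X × ℝ≥0 | q.ballWayBelow u p} ∧
    q.IsBallLUB {u : X × ℝ≥0 | q.ballWayBelow u p} p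

/-- A function `χ` is `𝓙`-closed: `ρ(ψ, χ) ≥ χ (colim ψ)` for every bounded ideal `ψ`
possessing a colimit. -/
def JClosed (q : QuasiMetric X) (χ : X → ℝ≥0∞) : Prop :=
  ∀ ψ : X → ℝ≥0∞, q.IsIdeal ψ → q.BoundedWeight ψ → ∀ c, q.IsColimit ψ c → χ c ≤ rho ψ χ

/-- `(X, d)` is a continuous `𝕁`-algebra: every bounded ideal has a colimit, and there is
a map `⇓` assigning to each `x` a bounded ideal `⇓x` with `ρ(⇓x, φ) = d x (colim φ)` for
all `x` and all bounded ideals `φ`. -/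
def ContinuousJAlgebra (q : QuasiMetric X) : Prop :=
  ∃ colim : (X → ℝ≥0∞) → X,
    (∀ φ, q.IsIdeal φ → q.BoundedWeight φ → q.IsColimit φ (colim φ)) ∧
    ∃ w : X → X → ℝ≥0∞,
      (∀ x, q.IsIdeal (w x) ∧ q.BoundedWeight (w x)) ∧
      ∀ (x : X) (φ : X → ℝ≥0∞), q.IsIdeal φ → q.BoundedWeight φ →
        rho (w x) φ = q.d x (colim φ)

/-- The quasi-metric space of all functions `X → [0,∞]` satisfying a predicate `P`
(e.g. the bounded weights, or the bounded ideals), with the quasi-metric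
`ρ(φ, ψ) = sup_x (ψ x ⊖ φ x)`. -/
noncomputable def weightSpace (q : QuasiMetric X) (P : (X → ℝ≥0∞) → Prop) :
    QuasiMetric {φ : X → ℝ≥0∞ // P φ} where
  d φ ψ := rho φ.1 ψ.1
  d_self φ := by simp [rho]
  d_triangle φ ψ χ := by
    refine iSup_le fun x => ?_
    calc χ.1 x - φ.1 x ≤ (χ.1 x - ψ.1 x) + (ψ.1 x - φ.1 x) := tsub_le_tsub_add_tsub
    _ ≤ rho ψ.1 χ.1 + rho φ.1 ψ.1 :=
        add_le_add (le_iSup (fun y => χ.1 y - ψ.1 y) x) (le_iSup (fun y => ψ.1 y - φ.1 y) x)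
    _ = rho φ.1 ψ.1 + rho ψ.1 χ.1 := add_comm _ _
  d_separated φ ψ h1 h2 := by
    apply Subtype.ext
    funext x
    have hx1 : ψ.1 x - φ.1 x ≤ 0 := by
      rw [← h1]; exact le_iSup (fun y => ψ.1 y - φ.1 y) x
    have hx2 : φ.1 x - ψ.1 x ≤ 0 := by
      rw [← h2]; exact le_iSup (fun y => φ.1 y - ψ.1 y) x
    exact le_antisymm (tsub_eq_zero_iff_le.mp (le_antisymm hx2 zero_le))
      (tsub_eq_zero_iff_le.mp (le_antisymm hx1 zero_le))

end QuasiMetric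

/-!
A directed set `S` of formal balls `(xᵢ, rᵢ)` determines the weight
`z ↦ inf_i sup_{j ⊒ i} d z xⱼ`. Since `d xⱼ xₖ ≤ rⱼ - inf r` for `j ⊑ k`, the centers form a
forward Cauchy net, and `ρ(netWeight S, λ) = inf_i sup_{j ⊒ i} λ xⱼ` for every weight `λ`; this
makes the weight an ideal, bounded when `S` is bounded above, and shows that a colimit `b` of it
is a Yoneda limit of the centers with `(b, inf r)` the least upper bound of `S`.

Conversely, if `φ` is an ideal with `d x a ≤ r₀ + φ x`, the balls `(x, s)` with `r₀ + φ x < s`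
form a set bounded above by `(a, 0)`, directed because `φ` is an ideal (two weights exceeding
`φ` somewhere exceed it at a common point). Its least upper bound exists, so standardness gives
a Yoneda limit of its centers, and this is a colimit of `φ`.
-/

namespace QuasiMetric

variable {X : Type u} {q : QuasiMetric X}

theorem ballLE_refl (q : QuasiMetric X) (p : X × ℝ≥0) : q.ballLE p p := by
  simp [ballLE, q.d_self]

theorem ballLE.trans {p p' p'' : X × ℝ≥0} (h : q.ballLE p p') (h' : q.ballLE p' p'') :
    q.ballLE p p'' :=
  calc (p''.2 : ℝ≥0∞) + q.d p.1 p''.1 ≤ p''.2 + (q.d p.1 p'.1 + q.d p'.1 p''.1) := by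
        gcongr; exact q.d_triangle _ _ _
    _ = (p''.2 + q.d p'.1 p''.1) + q.d p.1 p'.1 := by ring
    _ ≤ p'.2 + q.d p.1 p'.1 := by gcongr; exact h'
    _ ≤ p.2 := h

theorem ballLE.radius_le {p p' : X × ℝ≥0} (h : q.ballLE p p') : (p'.2 : ℝ≥0∞) ≤ p.2 :=
  le_self_add.trans h

theorem ballLE.d_le {p p' : X × ℝ≥0} (h : q.ballLE p p') : q.d p.1 p'.1 ≤ p.2 - p'.2 :=
  ENNReal.le_sub_of_add_le_left ENNReal.coe_ne_top h

theorem isWeight_d_right (q : QuasiMetric X) (y : X) : q.IsWeight (q.d · y) := fun z z' =>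
  (q.d_triangle z z' y).trans_eq (add_comm _ _)

theorem isWeight_tsub_d (q : QuasiMetric X) (c : ℝ≥0∞) (x : X) :
    q.IsWeight (fun z => c - q.d x z) := fun z z' =>
  calc c - q.d x z ≤ (c - q.d x z - q.d z z') + q.d z z' := le_tsub_add
    _ = (c - (q.d x z + q.d z z')) + q.d z z' := by rw [tsub_tsub]
    _ ≤ (c - q.d x z') + q.d z z' := by gcongr; exact q.d_triangle x z z'

theorem IsWeight.min {l m : X → ℝ≥0∞} (hl : q.IsWeight l) (hm : q.IsWeight m) :
    q.IsWeight (fun x => min (l x) (m x)) := fun x y =>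
  (min_le_min (hl x y) (hm x y)).trans_eq (min_add_add_right _ _ _)

theorem IsColimit.d_le {φ : X → ℝ≥0∞} {b : X} (hb : q.IsColimit φ b) (z : X) :
    q.d z b ≤ φ z := by
  have h : q.d z b - φ z ≤ q.d b b := (hb b).symm ▸ le_iSup (fun x => q.d x b - φ x) z
  rwa [q.d_self, nonpos_iff_eq_zero, tsub_eq_zero_iff_le] at h

theorem IsIdeal.exists_lt_and_lt {φ l m : X → ℝ≥0∞} (hφ : q.IsIdeal φ) (hl : q.IsWeight l)
    (hm : q.IsWeight m) {x y : X} (hx : φ x < l x) (hy : φ y < m y) :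
    ∃ w, φ w < l w ∧ φ w < m w := by
  have pos : ∀ {f : X → ℝ≥0∞} {z : X}, φ z < f z → 0 < rho φ f := fun {f z} h =>
    (tsub_pos_of_lt h).trans_le (le_iSup (fun z => f z - φ z) z)
  have hmin : 0 < rho φ (fun z => min (l z) (m z)) := by
    rw [hφ.2.2 l m hl hm]; exact lt_min (pos hx) (pos hy)
  obtain ⟨w, hw⟩ := lt_iSup_iff.mp hmin
  exact ⟨w, lt_min_iff.mp (tsub_pos_iff_lt.mp hw)⟩

section Net

variable (q) (S : Set (X × ℝ≥0))

noncomputable def tailSup (i : S) (f : S → ℝ≥0∞) : ℝ≥0∞ :=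
  ⨆ j : S, ⨆ _ : q.ballLE i.1 j.1, f j

noncomputable def netWeight (z : X) : ℝ≥0∞ :=
  ⨅ i : S, q.tailSup S i (fun j => q.d z j.1.1)

noncomputable def infRadius : ℝ≥0 :=
  ⨅ i : S, i.1.2

variable {q S}

theorem le_tailSup {i j : S} (h : q.ballLE i.1 j.1) (f : S → ℝ≥0∞) : f j ≤ q.tailSup S i f :=
  le_iSup₂ (f := fun j _ => f j) j h

theorem tailSup_le {i : S} {f : S → ℝ≥0∞} {c : ℝ≥0∞}
    (h : ∀ j : S, q.ballLE i.1 j.1 → f j ≤ c) : q.tailSup S i f ≤ c :=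
  iSup₂_le h

theorem tailSup_anti {i i' : S} (h : q.ballLE i.1 i'.1) (f : S → ℝ≥0∞) :
    q.tailSup S i' f ≤ q.tailSup S i f :=
  tailSup_le fun _ hj => le_tailSup (h.trans hj) f

theorem tailSup_mono {i : S} {f g : S → ℝ≥0∞} (h : ∀ j : S, q.ballLE i.1 j.1 → f j ≤ g j) :
    q.tailSup S i f ≤ q.tailSup S i g :=
  tailSup_le fun j hj => (h j hj).trans (le_tailSup hj g)

theorem netWeight_le_tailSup (i : S) (z : X) :
    q.netWeight S z ≤ q.tailSup S i (fun j => q.d z j.1.1) :=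
  iInf_le _ i

theorem infRadius_le (i : S) : infRadius S ≤ i.1.2 :=
  ciInf_le (OrderBot.bddBelow _) i

theorem exists_radius_lt_infRadius_add [Nonempty S] {ε : ℝ≥0} (hε : 0 < ε) :
    ∃ i : S, i.1.2 < infRadius S + ε :=
  exists_lt_of_ciInf_lt (lt_add_of_pos_right _ hε)

theorem d_le_radius_sub_infRadius {i j : S} (h : q.ballLE i.1 j.1) :
    q.d i.1.1 j.1.1 ≤ i.1.2 - infRadius S :=
  h.d_le.trans (by gcongr; exact_mod_cast infRadius_le j)

theorem d_le_of_radius_lt {ε : ℝ≥0} {i : S} (hi : i.1.2 < infRadius S + ε) {j k : S}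
    (hij : q.ballLE i.1 j.1) (hjk : q.ballLE j.1 k.1) : q.d j.1.1 k.1.1 ≤ ε :=
  calc q.d j.1.1 k.1.1 ≤ j.1.2 - infRadius S := d_le_radius_sub_infRadius hjk
    _ ≤ i.1.2 - infRadius S := by gcongr; exact_mod_cast hij.radius_le
    _ ≤ ε := by
        rw [tsub_le_iff_left]; exact_mod_cast hi.le

theorem netWeight_le_of_radius_lt {ε : ℝ≥0} {i : S} (hi : i.1.2 < infRadius S + ε) {j : S}
    (hij : q.ballLE i.1 j.1) : q.netWeight S j.1.1 ≤ ε :=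
  (netWeight_le_tailSup j _).trans (tailSup_le fun _ hk => d_le_of_radius_lt hi hij hk)

theorem rho_netWeight (hdir : DirectedOn q.ballLE S) [Nonempty S] {l : X → ℝ≥0∞}
    (hl : q.IsWeight l) : rho (q.netWeight S) l = ⨅ i : S, q.tailSup S i (fun j => l j.1.1) := by
  apply le_antisymm
  · refine iSup_le fun z => tsub_le_iff_right.mpr ?_
    rw [netWeight, ENNReal.add_iInf]
    refine le_iInf fun i => ?_
    rw [ENNReal.iInf_add]
    refine le_iInf fun i' => ?_
    obtain ⟨k, hkS, hik, hi'k⟩ := hdir i.1 i.2 i'.1 i'.2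
    calc l z ≤ l k.1 + q.d z k.1 := hl z k.1
      _ ≤ _ := add_le_add (le_tailSup (j := ⟨k, hkS⟩) hi'k _) (le_tailSup (j := ⟨k, hkS⟩) hik _)
  · refine ENNReal.le_of_forall_pos_le_add fun ε hε _ => ?_
    obtain ⟨i₀, hi₀⟩ := exists_radius_lt_infRadius_add (S := S) hε
    refine (iInf_le _ i₀).trans (tailSup_le fun j hj => ?_)
    calc l j.1.1 ≤ (l j.1.1 - q.netWeight S j.1.1) + q.netWeight S j.1.1 := le_tsub_add
      _ ≤ rho (q.netWeight S) l + ε :=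
        add_le_add (le_iSup (fun z => l z - q.netWeight S z) j.1.1)
          (netWeight_le_of_radius_lt hi₀ hj)

theorem isWeight_netWeight : q.IsWeight (q.netWeight S) := fun z z' =>
  calc q.netWeight S z ≤ ⨅ i : S, q.tailSup S i (fun j => q.d z' j.1.1) + q.d z z' :=
        le_iInf fun i => (netWeight_le_tailSup i z).trans <| tailSup_le fun j hj =>
          (q.d_triangle z z' j.1.1).trans <| by
            rw [add_comm]; gcongr; exact le_tailSup hj (fun j => q.d z' j.1.1)
    _ = q.netWeight S z' + q.d z z' := ENNReal.iInf_add.symm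

theorem iInf_netWeight [Nonempty S] : ⨅ z, q.netWeight S z = 0 := by
  refine le_antisymm (ENNReal.le_of_forall_pos_le_add fun ε hε _ => ?_) zero_le
  obtain ⟨i, hi⟩ := exists_radius_lt_infRadius_add (S := S) hε
  rw [zero_add]
  exact (iInf_le _ i.1.1).trans (netWeight_le_of_radius_lt hi (ballLE_refl q i.1))

theorem min_iInf_tailSup_le (hdir : DirectedOn q.ballLE S) [Nonempty S] {l m : X → ℝ≥0∞}
    (hl : q.IsWeight l) (i : S) :
    min (⨅ i : S, q.tailSup S i fun j => l j.1.1) (⨅ i : S, q.tailSup S i fun j => m j.1.1)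
      ≤ q.tailSup S i fun j => min (l j.1.1) (m j.1.1) := by
  refine ENNReal.le_of_forall_pos_le_add fun ε hε _ => ?_
  obtain ⟨iε, hiε⟩ := exists_radius_lt_infRadius_add (S := S) hε
  obtain ⟨k, hkS, hik, hiεk⟩ := hdir i.1 i.2 iε.1 iε.2
  set i₀ : S := ⟨k, hkS⟩
  by_cases hcof : ∀ j : S, q.ballLE i₀.1 j.1 → ∃ j' : S, q.ballLE j.1 j'.1 ∧ l j'.1.1 ≤ m j'.1.1
  · calc _ ≤ ⨅ i : S, q.tailSup S i fun j => l j.1.1 := min_le_left _ _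
      _ ≤ q.tailSup S i₀ fun j => l j.1.1 := iInf_le _ i₀
      _ ≤ (q.tailSup S i₀ fun j => min (l j.1.1) (m j.1.1)) + ε := tailSup_le fun j hj => ?_
      _ ≤ _ := by gcongr; exact tailSup_anti hik _
    obtain ⟨j', hjj', hlm⟩ := hcof j hj
    calc l j.1.1 ≤ l j'.1.1 + q.d j.1.1 j'.1.1 := hl _ _
      _ ≤ min (l j'.1.1) (m j'.1.1) + ε :=
        add_le_add (le_min le_rfl hlm) (d_le_of_radius_lt hiε (hiεk.trans hj) hjj')
      _ ≤ _ := by gcongr; exact le_tailSup (hj.trans hjj') (fun j => min (l j.1.1) (m j.1.1))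
  · push Not at hcof
    obtain ⟨j₁, hj₁, hml⟩ := hcof
    calc _ ≤ ⨅ i : S, q.tailSup S i fun j => m j.1.1 := min_le_right _ _
      _ ≤ q.tailSup S j₁ fun j => m j.1.1 := iInf_le _ j₁
      _ ≤ q.tailSup S j₁ fun j => min (l j.1.1) (m j.1.1) :=
        tailSup_mono fun j hj => le_min (hml j hj).le le_rfl
      _ ≤ q.tailSup S i fun j => min (l j.1.1) (m j.1.1) := tailSup_anti (hik.trans hj₁) _
      _ ≤ _ := le_self_add

theorem isIdeal_netWeight (hdir : DirectedOn q.ballLE S) [Nonempty S] :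
    q.IsIdeal (q.netWeight S) := by
  refine ⟨isWeight_netWeight, iInf_netWeight, fun l m hl hm => ?_⟩
  rw [rho_netWeight hdir (hl.min hm), rho_netWeight hdir hl, rho_netWeight hdir hm]
  exact le_antisymm
    (le_min (iInf_mono fun _ => tailSup_mono fun _ _ => min_le_left _ _)
      (iInf_mono fun _ => tailSup_mono fun _ _ => min_le_right _ _))
    (le_iInf (min_iInf_tailSup_le hdir hl))

theorem boundedWeight_netWeight (hdir : DirectedOn q.ballLE S) [Nonempty S] {c : X × ℝ≥0}
    (hc : ∀ p ∈ S, q.ballLE p c) : q.BoundedWeight (q.netWeight S) := by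
  obtain ⟨i₀⟩ := ‹Nonempty S›
  refine ⟨i₀.1.2, c.1, fun z => ?_⟩
  rw [netWeight, ENNReal.add_iInf]
  refine le_iInf fun i => ?_
  obtain ⟨k, hkS, hik, hi₀k⟩ := hdir i.1 i.2 i₀.1 i₀.2
  calc q.d z c.1 ≤ q.d z k.1 + q.d k.1 c.1 := q.d_triangle _ _ _
    _ ≤ q.tailSup S i (fun j => q.d z j.1.1) + i₀.1.2 :=
      add_le_add (le_tailSup (j := ⟨k, hkS⟩) hik _)
        (le_trans (le_add_self.trans (hc k hkS)) hi₀k.radius_le)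
    _ = _ := add_comm _ _

theorem IsColimit.isYonedaLimit_netWeight (hdir : DirectedOn q.ballLE S) [Nonempty S] {b : X}
    (hb : q.IsColimit (q.netWeight S) b) :
    q.IsYonedaLimit (fun p p' : S => q.ballLE p.1 p'.1) (fun p : S => p.1.1) b := fun y =>
  (hb y).trans (rho_netWeight hdir (q.isWeight_d_right y))

theorem IsColimit.isBallLUB_netWeight (hdir : DirectedOn q.ballLE S) [Nonempty S] {b : X}
    (hb : q.IsColimit (q.netWeight S) b) : q.IsBallLUB S (b, infRadius S) := by
  refine ⟨fun p hp => ?_, fun c hc => ?_⟩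
  · have h : q.d p.1 b ≤ p.2 - infRadius S :=
      (hb.d_le p.1).trans <| (netWeight_le_tailSup ⟨p, hp⟩ p.1).trans <|
        tailSup_le fun _ hj => d_le_radius_sub_infRadius hj
    show (infRadius S : ℝ≥0∞) + q.d p.1 b ≤ p.2
    calc _ ≤ (infRadius S : ℝ≥0∞) + (p.2 - infRadius S) := by gcongr
      _ = p.2 := add_tsub_cancel_of_le (by exact_mod_cast infRadius_le ⟨p, hp⟩)
  · show (c.2 : ℝ≥0∞) + q.d b c.1 ≤ infRadius S
    refine ENNReal.le_of_forall_pos_le_add fun ε hε _ => ?_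
    obtain ⟨i, hi⟩ := exists_radius_lt_infRadius_add (S := S) hε
    have h : q.d b c.1 ≤ i.1.2 - c.2 := by
      rw [hb.isYonedaLimit_netWeight hdir c.1]
      refine (iInf_le _ i).trans (tailSup_le fun j hj => (hc j.1 j.2).d_le.trans ?_)
      gcongr; exact_mod_cast hj.radius_le
    calc (c.2 : ℝ≥0∞) + q.d b c.1 ≤ c.2 + (i.1.2 - c.2) := by gcongr
      _ = i.1.2 := add_tsub_cancel_of_le (hc i.1 i.2).radius_le
      _ ≤ infRadius S + ε := by exact_mod_cast hi.le

theorem exists_isYonedaLimit_isBallLUB_of_forall_isColimit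
    (hcolim : ∀ φ, q.IsIdeal φ → q.BoundedWeight φ → ∃ b, q.IsColimit φ b)
    (hne : S.Nonempty) (hdir : DirectedOn q.ballLE S) (hub : ∃ c, ∀ p ∈ S, q.ballLE p c) :
    ∃ b, q.IsYonedaLimit (fun p p' : S => q.ballLE p.1 p'.1) (fun p : S => p.1.1) b ∧
      q.IsBallLUB S (b, infRadius S) := by
  have := hne.to_subtype
  obtain ⟨c, hc⟩ := hub
  obtain ⟨b, hb⟩ := hcolim _ (isIdeal_netWeight hdir) (boundedWeight_netWeight hdir hc)
  exact ⟨b, hb.isYonedaLimit_netWeight hdir, hb.isBallLUB_netWeight hdir⟩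

end Net

section IdealBalls

variable {φ : X → ℝ≥0∞} {r₀ : ℝ≥0}

def idealBalls (φ : X → ℝ≥0∞) (r₀ : ℝ≥0) : Set (X × ℝ≥0) :=
  {p | r₀ + φ p.1 < p.2}

theorem mem_idealBalls {p : X × ℝ≥0} : p ∈ idealBalls φ r₀ ↔ r₀ + φ p.1 < p.2 :=
  Iff.rfl

theorem exists_mem_idealBalls (hφ : ⨅ x, φ x = 0) {ε : ℝ≥0} (hε : 0 < ε) :
    ∃ z, (z, r₀ + ε) ∈ idealBalls φ r₀ := by
  obtain ⟨z, hz⟩ := iInf_lt_iff.mp (hφ.trans_lt (ENNReal.coe_pos.mpr hε))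
  exact ⟨z, by simpa [idealBalls] using hz⟩

theorem ballLE_of_mem_idealBalls {a : X} (ha : ∀ x, q.d x a ≤ r₀ + φ x) {p : X × ℝ≥0}
    (hp : p ∈ idealBalls φ r₀) : q.ballLE p (a, 0) := by
  simpa [ballLE] using (ha p.1).trans hp.le

theorem lt_tsub_d_iff {x w : X} {s : ℝ≥0} :
    φ w < (s - r₀) - q.d x w ↔ r₀ + φ w < s - q.d x w := by
  rw [lt_tsub_iff_right, lt_tsub_iff_right, lt_tsub_iff_right, add_comm _ (r₀ : ℝ≥0∞), ← add_assoc]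

theorem directedOn_idealBalls (hφ : q.IsIdeal φ) : DirectedOn q.ballLE (idealBalls φ r₀) := by
  rintro ⟨x₁, s₁⟩ h₁ ⟨x₂, s₂⟩ h₂
  have center_lt {x : X} {s : ℝ≥0} (h : (x, s) ∈ idealBalls φ r₀) : φ x < (s - r₀) - q.d x x := by
    rwa [lt_tsub_d_iff, q.d_self, tsub_zero]
  obtain ⟨w, hw₁, hw₂⟩ := hφ.exists_lt_and_lt (q.isWeight_tsub_d _ x₁) (q.isWeight_tsub_d _ x₂)
    (center_lt h₁) (center_lt h₂)
  rw [lt_tsub_d_iff] at hw₁ hw₂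
  obtain ⟨u, hwu, hu⟩ := ENNReal.lt_iff_exists_nnreal_btwn.mp (lt_min hw₁ hw₂)
  exact ⟨(w, u), hwu, (lt_tsub_iff_right.mp (hu.trans_le (min_le_left _ _))).le,
    (lt_tsub_iff_right.mp (hu.trans_le (min_le_right _ _))).le⟩

theorem iInf_tailSup_le_of_idealBalls (hφ : ⨅ x, φ x = 0) (y : X) :
    ⨅ i : idealBalls φ r₀, q.tailSup _ i (fun j => q.d j.1.1 y) ≤ ⨆ z, q.d z y - φ z := by
  refine ENNReal.le_of_forall_pos_le_add fun ε hε _ => ?_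
  obtain ⟨z, hz⟩ := exists_mem_idealBalls (r₀ := r₀) hφ hε
  refine (iInf_le _ ⟨_, hz⟩).trans (tailSup_le fun j hj => ?_)
  have hφj : φ j.1.1 ≤ ε := by
    have h : (r₀ : ℝ≥0∞) + φ j.1.1 ≤ r₀ + ε := by
      have := hj.radius_le
      push_cast at this
      exact j.2.le.trans this
    exact (ENNReal.add_le_add_iff_left ENNReal.coe_ne_top).mp h
  calc q.d j.1.1 y ≤ (q.d j.1.1 y - φ j.1.1) + φ j.1.1 := le_tsub_add
    _ ≤ _ := add_le_add (le_iSup (fun z => q.d z y - φ z) j.1.1) hφj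

theorem tsub_le_tailSup_of_idealBalls (hdir : DirectedOn q.ballLE (idealBalls φ r₀))
    (i : idealBalls φ r₀) (y z : X) :
    q.d z y - φ z ≤ q.tailSup _ i (fun j => q.d j.1.1 y) := by
  rcases eq_or_ne (φ z) ∞ with hz | hz
  · simp [hz]
  refine ENNReal.le_of_forall_pos_le_add fun ε hε _ => ?_
  -- A common upper bound of `i` and `(z, r₀ + φ z + ε)` has its center within `φ z + ε` of `z`.
  have hzS : (z, r₀ + (φ z).toNNReal + ε) ∈ idealBalls φ r₀ := by
    show (r₀ : ℝ≥0∞) + φ z < ((r₀ + (φ z).toNNReal + ε : ℝ≥0) : ℝ≥0∞)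
    push_cast
    rw [ENNReal.coe_toNNReal hz]
    exact ENNReal.lt_add_right (by simp [hz]) (by simpa using hε.ne')
  obtain ⟨k, hkS, hik, hzk⟩ := hdir i.1 i.2 _ hzS
  have hdz : q.d z k.1 ≤ φ z + ε := by
    have h : (r₀ : ℝ≥0∞) + q.d z k.1 ≤ r₀ + (φ z + ε) :=
      calc (r₀ : ℝ≥0∞) + q.d z k.1 ≤ k.2 + q.d z k.1 := by
            gcongr; exact_mod_cast le_self_add.trans (mem_idealBalls.mp hkS).le
        _ ≤ r₀ + (φ z + ε) := by
          refine hzk.trans_eq ?_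
          push_cast
          rw [ENNReal.coe_toNNReal hz, add_assoc]
    exact (ENNReal.add_le_add_iff_left ENNReal.coe_ne_top).mp h
  rw [tsub_le_iff_left]
  calc q.d z y ≤ q.d z k.1 + q.d k.1 y := q.d_triangle _ _ _
    _ ≤ (φ z + ε) + q.tailSup _ i (fun j => q.d j.1.1 y) :=
      add_le_add hdz (le_tailSup (j := ⟨k, hkS⟩) hik _)
    _ = _ := by ring

theorem IsIdeal.isColimit_of_isYonedaLimit (hφ : q.IsIdeal φ) {b : X}
    (hb : q.IsYonedaLimit (fun p p' : idealBalls φ r₀ => q.ballLE p.1 p'.1) (fun p => p.1.1) b) :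
    q.IsColimit φ b := fun y =>
  (hb y).trans <| le_antisymm (iInf_tailSup_le_of_idealBalls hφ.2.1 y) <|
    iSup_le fun z => le_iInf fun i => tsub_le_tailSup_of_idealBalls (directedOn_idealBalls hφ) i y z

end IdealBalls

end QuasiMetric

open QuasiMetric in
/-- every bounded ideal of `(X, d)` has a colimit iff `(X, d)` is standard
and the poset `BX` of formal balls is a local dcpo. -/
theorem stmt14 {X : Type u} (q : QuasiMetric X) :
    (∀ φ : X → ℝ≥0∞, q.IsIdeal φ → q.BoundedWeight φ → ∃ b, q.IsColimit φ b) ↔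
      (q.Standard ∧ q.BallLocalDcpo) := by
  constructor
  · intro hcolim
    refine ⟨fun S hne hdir ⟨c, hc⟩ => ?_, fun S hne hdir hub => ?_⟩
    · obtain ⟨b, hb, -⟩ :=
        exists_isYonedaLimit_isBallLUB_of_forall_isColimit hcolim hne hdir ⟨c, hc.1⟩
      exact ⟨b, hb⟩
    · obtain ⟨b, -, hb⟩ := exists_isYonedaLimit_isBallLUB_of_forall_isColimit hcolim hne hdir hub
      exact ⟨_, hb⟩
  · rintro ⟨hstd, hlocal⟩ φ hφ ⟨r₀, a, ha⟩
    obtain ⟨z, hz⟩ := exists_mem_idealBalls (r₀ := r₀) hφ.2.1 one_pos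
    have hdir : DirectedOn q.ballLE (idealBalls φ r₀) := directedOn_idealBalls hφ
    have hub : ∀ p ∈ idealBalls φ r₀, q.ballLE p (a, 0) := fun _ => ballLE_of_mem_idealBalls ha
    obtain ⟨b, hb⟩ := hstd _ ⟨_, hz⟩ hdir (hlocal _ ⟨_, hz⟩ hdir ⟨_, hub⟩)
    exact ⟨b, hφ.isColimit_of_isYonedaLimit hb⟩
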